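/- arXiv:2308.05689 — 3 statements merged into one kernel-verified Lean document; each statement's English description precedes it below -/
import Mathlib

section
/- Let R be a stability function of order p ∈ ℕ with s stages. If p is odd and γ_{p+1} := (−1)^{(p+1)/2}(1 − c_{p+1}) < 0, or if p is even and δ_{p+1} := (−1)^{p/2}(c_{p+2} − (p+2)c_{p+1} + (p+1)) < 0, then R is not locally stable on the imaginary axis: for every Z > 0 there exists y ∈ ℝ with 0 < |y| ≤ Z and |R(iy)| > 1. -/
open Matrix Polynomial
open scoped Matrix.Norms.L2Operator ComplexOrder

noncomputable section

/-- Hermitian part `L_H = (L + L*)/2` of a matrix. -/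
def hermPart {n : ℕ} (L : Matrix (Fin n) (Fin n) ℂ) : Matrix (Fin n) (Fin n) ℂ :=
  (1/2 : ℂ) • (L + Lᴴ)

/-- Skew-Hermitian part `L_S = (L - L*)/2` of a matrix. -/
def skewPart {n : ℕ} (L : Matrix (Fin n) (Fin n) ℂ) : Matrix (Fin n) (Fin n) ℂ :=
  (1/2 : ℂ) • (L - Lᴴ)

/-- A matrix is semi-dissipative if its Hermitian part is negative semidefinite. -/
def IsSemiDissipative {n : ℕ} (L : Matrix (Fin n) (Fin n) ℂ) : Prop :=
  (-(hermPart L)).PosSemidef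

/-- A matrix is asymptotically stable if all of its eigenvalues have negative real part. -/
def IsAsympStable {n : ℕ} (L : Matrix (Fin n) (Fin n) ℂ) : Prop :=
  ∀ μ ∈ spectrum ℂ L, μ.re < 0

/-- Evaluation of the stability function `R(z) = ∑_{j=0}^s c_j z^j / j!` at a matrix. -/
def stabFunMat (c : ℕ → ℝ) (s : ℕ) {n : ℕ} (M : Matrix (Fin n) (Fin n) ℂ) :
    Matrix (Fin n) (Fin n) ℂ :=
  ∑ j ∈ Finset.range (s + 1), ((c j : ℂ) / (j.factorial : ℂ)) • M ^ j

/-- Evaluation of the stability function `R(z) = ∑_{j=0}^s c_j z^j / j!` at a complex scalar. -/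
def stabFun (c : ℕ → ℝ) (s : ℕ) (z : ℂ) : ℂ :=
  ∑ j ∈ Finset.range (s + 1), (c j : ℂ) * z ^ j / (j.factorial : ℂ)

/-- `c` is the coefficient sequence of a stability function of order `p` with `s` stages:
`c j = 1` for `j ≤ p`, `c (p+1) ≠ 1`, and `c j = 0` for `j > s`. -/
structure IsStabilityFunction (c : ℕ → ℝ) (p s : ℕ) : Prop where
  pos : 0 < p
  ple : p ≤ s
  low : ∀ j ≤ p, c j = 1
  cp1 : c (p + 1) ≠ 1
  high : ∀ j, s < j → c j = 0

/-- The matrix `T_m = ∑_{j=0}^m L_S^j L_H (L_S^*)^j` from the definition of the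
hypocoercivity index. -/
def Tmat {n : ℕ} (L : Matrix (Fin n) (Fin n) ℂ) (m : ℕ) : Matrix (Fin n) (Fin n) ℂ :=
  ∑ j ∈ Finset.range (m + 1), (skewPart L) ^ j * hermPart L * ((skewPart L)ᴴ) ^ j

/-- `m` is the hypocoercivity index of `L`: the smallest `m` with `T_m` negative definite. -/
def IsHCIndex {n : ℕ} (L : Matrix (Fin n) (Fin n) ℂ) (m : ℕ) : Prop :=
  (-(Tmat L m)).PosDef ∧ ∀ k < m, ¬ (-(Tmat L k)).PosDef

/-- Strong stability of a stability function: monotonicity of the `P`-norm of the numerical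
solution, for every Lyapunov stable `L` and every admissible `P`. -/
def StronglyStable (c : ℕ → ℝ) (s : ℕ) : Prop :=
  ∀ (n : ℕ) (L P : Matrix (Fin n) (Fin n) ℂ), P.PosDef →
    (-(Lᴴ * P + P * L)).PosSemidef →
    ∃ τ₀ > (0:ℝ), ∀ τ : ℝ, 0 < τ → τ ≤ τ₀ → ∀ u : Fin n → ℂ,
      (star (stabFunMat c s ((τ:ℂ) • L) *ᵥ u) ⬝ᵥ (P *ᵥ (stabFunMat c s ((τ:ℂ) • L) *ᵥ u))).re ≤
        (star u ⬝ᵥ (P *ᵥ u)).re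

/-!
For real `y`, `‖R(iy)‖² - 1 = R(iy) R(-iy) - 1` is a polynomial in `y` whose coefficient of
`y^k` is `(-i)^k ∑_{m ≤ k} (c_m c_{k-m} - 1) (-1)^m / (m! (k-m)!)`; the `-1` may be pulled into
the sum because `∑_{m ≤ k} (-1)^m / (m! (k-m)!) = (1 - 1)^k / k!`. As `c_j = 1` for `j ≤ p`,
only the terms with `m > p` or `k - m > p` survive, so the coefficients vanish up to degree `p`.
For odd `p` the coefficient of `y^(p+1)` is `-2 γ_{p+1} / (p+1)!`; for even `p` it vanishes and
the coefficient of `y^(p+2)` is `-2 δ_{p+1} / (p+2)!`. Under the hypothesis this lowest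
coefficient is positive, so `‖R(iy)‖ > 1` for all sufficiently small `y > 0`.
-/

open Complex Finset Filter Topology
open scoped Nat ComplexConjugate

lemma sum_range_neg_one_pow_div_factorial_mul_factorial (k : ℕ) :
    ∑ m ∈ range (k + 1), (-1 : ℝ) ^ m / (m ! * (k - m)!) = if k = 0 then 1 else 0 := by
  calc ∑ m ∈ range (k + 1), (-1 : ℝ) ^ m / (m ! * (k - m)!)
      = ∑ m ∈ range (k + 1), (-1 : ℝ) ^ m * 1 ^ (k - m) * (k.choose m) / k ! := by
        refine sum_congr rfl fun m hm => ?_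
        rw [Nat.cast_choose ℝ (mem_range_succ_iff.1 hm), one_pow]
        field_simp
    _ = (-1 + 1) ^ k / k ! := by rw [add_pow, sum_div]
    _ = if k = 0 then 1 else 0 := by rcases k with _ | k <;> simp

lemma I_pow_mul_neg_I_pow_sub {k m : ℕ} (hm : m ≤ k) :
    I ^ m * (-I) ^ (k - m) = (-I) ^ k * (-1) ^ m := by
  have hI : I ^ m = (-1) ^ m * (-I) ^ m := by rw [← mul_pow, neg_one_mul, neg_neg]
  rw [hI, mul_assoc, ← pow_add, Nat.add_sub_cancel' hm, mul_comm]

lemma neg_I_pow_of_even {k : ℕ} (hk : Even k) : (-I) ^ k = (-1) ^ (k / 2) := by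
  obtain ⟨n, rfl⟩ := hk
  rw [← two_mul, pow_mul, neg_sq, I_sq, Nat.mul_div_cancel_left _ two_pos]

lemma Polynomial.eventually_re_eval_pos (q : ℂ[X]) {N : ℕ} (hlow : ∀ d < N, q.coeff d = 0)
    (hN : 0 < (q.coeff N).re) : ∀ᶠ y : ℝ in 𝓝[>] 0, 0 < (q.eval (y : ℂ)).re := by
  obtain ⟨r, rfl⟩ := X_pow_dvd_iff.mpr hlow
  have hr0 : 0 < (r.eval ((0 : ℝ) : ℂ)).re := by
    simpa [coeff_X_pow_mul', coeff_zero_eq_eval_zero] using hN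
  have hcont : Continuous fun y : ℝ => (r.eval (y : ℂ)).re := by fun_prop
  filter_upwards [nhdsWithin_le_nhds (continuousAt_const.eventually_lt hcont.continuousAt hr0),
    self_mem_nhdsWithin] with y hy hy0
  rw [eval_mul, eval_pow, eval_X, ← ofReal_pow, re_ofReal_mul]
  exact mul_pos (pow_pos hy0 N) hy

section StabilityPolynomial

variable (c : ℕ → ℝ) (s : ℕ)

def stabPoly (w : ℂ) : ℂ[X] :=
  ∑ j ∈ range (s + 1), C ((c j : ℂ) * w ^ j / (j ! : ℂ)) * X ^ j

def normSqDefectPoly : ℂ[X] :=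
  stabPoly c s I * stabPoly c s (-I) - 1

def defectCoeff (k : ℕ) : ℝ :=
  ∑ m ∈ range (k + 1), (c m * c (k - m) - 1) * (-1) ^ m / (m ! * (k - m)!)

variable {c s}

lemma coeff_stabPoly (hc : ∀ j, s < j → c j = 0) (w : ℂ) (j : ℕ) :
    (stabPoly c s w).coeff j = (c j : ℂ) * w ^ j / (j ! : ℂ) := by
  simp only [stabPoly, finsetSum_coeff, coeff_C_mul_X_pow, sum_ite_eq, mem_range]
  split_ifs with hj
  · rfl
  · simp [hc j (by omega)]

lemma eval_stabPoly (w z : ℂ) : (stabPoly c s w).eval z = stabFun c s (w * z) := by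
  simp only [stabPoly, stabFun, eval_finsetSum, eval_mul, eval_C, eval_pow, eval_X, mul_pow]
  exact sum_congr rfl fun j _ => by ring

lemma stabFun_conj (z : ℂ) : conj (stabFun c s z) = stabFun c s (conj z) := by
  simp [stabFun]

lemma eval_normSqDefectPoly (y : ℝ) :
    (normSqDefectPoly c s).eval (y : ℂ) = ((‖stabFun c s (I * y)‖ ^ 2 - 1 : ℝ) : ℂ) := by
  have hconj : stabFun c s (-I * y) = conj (stabFun c s (I * y)) := by
    rw [stabFun_conj]; simp [conj_ofReal]
  rw [normSqDefectPoly, eval_sub, eval_mul, eval_one, eval_stabPoly, eval_stabPoly, hconj,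
    mul_conj, normSq_eq_norm_sq]
  push_cast; ring

lemma coeff_normSqDefectPoly (hc : ∀ j, s < j → c j = 0) (k : ℕ) :
    (normSqDefectPoly c s).coeff k = (-I) ^ k * (defectCoeff c k : ℂ) := by
  have hone : (coeff 1 k : ℂ) = (-I) ^ k * ((∑ m ∈ range (k + 1),
      (-1 : ℝ) ^ m / (m ! * (k - m)!) : ℝ) : ℂ) := by
    rw [sum_range_neg_one_pow_div_factorial_mul_factorial, coeff_one]
    split_ifs with hk <;> simp [hk]
  rw [normSqDefectPoly, coeff_sub, coeff_mul, Nat.sum_antidiagonal_eq_sum_range_succ_mk, hone,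
    defectCoeff]
  simp only [sub_mul, sub_div, one_mul, sum_sub_distrib, ofReal_sub, mul_sub]
  congr 1
  rw [ofReal_sum, mul_sum]
  refine sum_congr rfl fun m hm => ?_
  simp only [coeff_stabPoly hc]
  push_cast
  linear_combination ((c m : ℂ) * c (k - m) / (m ! * (k - m)!)) *
    I_pow_mul_neg_I_pow_sub (mem_range_succ_iff.1 hm)

end StabilityPolynomial

section DefectCoeff

variable {c : ℕ → ℝ} {p : ℕ}

lemma defectCoeff_eq_zero_of_le (hlow : ∀ j ≤ p, c j = 1) {k : ℕ} (hk : k ≤ p) :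
    defectCoeff c k = 0 :=
  sum_eq_zero fun m hm => by
    rw [hlow m (by grind), hlow (k - m) (by omega)]
    ring

lemma defectCoeff_eq_sum_of_subset (hlow : ∀ j ≤ p, c j = 1) {k : ℕ} {S : Finset ℕ}
    (hS : S ⊆ range (k + 1)) (hout : ∀ m ≤ k, m ∉ S → m ≤ p ∧ k - m ≤ p) :
    defectCoeff c k =
      ∑ m ∈ S, (c m * c (k - m) - 1) * (-1) ^ m / (m ! * (k - m)!) := by
  refine (sum_subset hS fun m hm hmS => ?_).symm
  obtain ⟨hm, hkm⟩ := hout m (mem_range_succ_iff.1 hm) hmS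
  rw [hlow m hm, hlow (k - m) hkm]
  ring

lemma defectCoeff_order_succ (hlow : ∀ j ≤ p, c j = 1) :
    defectCoeff c (p + 1) = (c (p + 1) - 1) * (1 + (-1) ^ (p + 1)) / (p + 1)! := by
  rw [defectCoeff_eq_sum_of_subset hlow (S := {0, p + 1}) (by grind) (by grind),
    sum_pair (by omega)]
  simp [hlow 0 p.zero_le]
  ring

lemma defectCoeff_order_add_two (hlow : ∀ j ≤ p, c j = 1) (hp : 0 < p) :
    defectCoeff c (p + 2) = (c (p + 2) - 1) * (1 + (-1) ^ p) / (p + 2)!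
      - (c (p + 1) - 1) * (1 + (-1) ^ p) / (p + 1)! := by
  rw [defectCoeff_eq_sum_of_subset hlow (S := {0, 1, p + 1, p + 2}) (by grind) (by grind),
    sum_insert (by grind), sum_insert (by grind), sum_pair (by omega)]
  simp [hlow 0 p.zero_le, hlow 1 hp, show p + 2 - 1 = p + 1 by omega]
  ring

end DefectCoeff

section Coefficients

variable {c : ℕ → ℝ} {p s : ℕ}

lemma coeff_normSqDefectPoly_order_succ_of_odd (h : IsStabilityFunction c p s) (hp : Odd p) :
    (normSqDefectPoly c s).coeff (p + 1) =
      ((-2 * ((-1) ^ ((p + 1) / 2) * (1 - c (p + 1))) / (p + 1)! : ℝ) : ℂ) := by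
  rw [coeff_normSqDefectPoly h.high, defectCoeff_order_succ h.low, neg_I_pow_of_even hp.add_one,
    hp.add_one.neg_one_pow]
  push_cast
  ring

lemma coeff_normSqDefectPoly_order_succ_of_even (h : IsStabilityFunction c p s) (hp : Even p) :
    (normSqDefectPoly c s).coeff (p + 1) = 0 := by
  rw [coeff_normSqDefectPoly h.high, defectCoeff_order_succ h.low, hp.add_one.neg_one_pow]
  simp

lemma coeff_normSqDefectPoly_order_add_two_of_even (h : IsStabilityFunction c p s)
    (hp : Even p) :
    (normSqDefectPoly c s).coeff (p + 2) = ((-2 * ((-1) ^ (p / 2) *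
      (c (p + 2) - (p + 2) * c (p + 1) + (p + 1))) / (p + 2)! : ℝ) : ℂ) := by
  have hp2 : (p + 2) / 2 = p / 2 + 1 := by omega
  rw [coeff_normSqDefectPoly h.high, defectCoeff_order_add_two h.low h.pos,
    neg_I_pow_of_even (hp.add even_two), hp2, hp.neg_one_pow, Nat.factorial_succ (p + 1)]
  push_cast
  field_simp
  ring

end Coefficients

lemma exists_coeff_normSqDefectPoly_re_pos {c : ℕ → ℝ} {p s : ℕ} (h : IsStabilityFunction c p s)
    (hcond :
      (Odd p ∧ (-1 : ℝ) ^ ((p + 1) / 2) * (1 - c (p + 1)) < 0) ∨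
      (Even p ∧ (-1 : ℝ) ^ (p / 2) * (c (p + 2) - (p + 2) * c (p + 1) + (p + 1)) < 0)) :
    ∃ N, (∀ d < N, (normSqDefectPoly c s).coeff d = 0) ∧
      0 < ((normSqDefectPoly c s).coeff N).re := by
  have hlow : ∀ d ≤ p, (normSqDefectPoly c s).coeff d = 0 := fun d hd => by
    rw [coeff_normSqDefectPoly h.high, defectCoeff_eq_zero_of_le h.low hd, ofReal_zero, mul_zero]
  rcases hcond with ⟨hp, hγ⟩ | ⟨hp, hδ⟩
  · refine ⟨p + 1, fun d hd => hlow d (by omega), ?_⟩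
    rw [coeff_normSqDefectPoly_order_succ_of_odd h hp, ofReal_re]
    exact div_pos (by linarith) (by positivity)
  · refine ⟨p + 2, fun d hd => ?_, ?_⟩
    · rcases Nat.lt_succ_iff_lt_or_eq.1 hd with hd | rfl
      · exact hlow d (by omega)
      · exact coeff_normSqDefectPoly_order_succ_of_even h hp
    · rw [coeff_normSqDefectPoly_order_add_two_of_even h hp, ofReal_re]
      exact div_pos (by linarith) (by positivity)

/-- negativity of `γ_{p+1}` (odd `p`) resp. `δ_{p+1}` (even `p`) implies failure
of local stability on the imaginary axis. -/
theorem stmt7 (c : ℕ → ℝ) (p s : ℕ) (h : IsStabilityFunction c p s)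
    (hcond :
      (Odd p ∧ (-1 : ℝ) ^ ((p + 1) / 2) * (1 - c (p + 1)) < 0) ∨
      (Even p ∧ (-1 : ℝ) ^ (p / 2) * (c (p + 2) - (p + 2) * c (p + 1) + (p + 1)) < 0)) :
    ∀ Z > (0:ℝ), ∃ y : ℝ, 0 < |y| ∧ |y| ≤ Z ∧
      1 < ‖stabFun c s (Complex.I * (y:ℂ))‖ := by
  intro Z hZ
  obtain ⟨N, hlow, hN⟩ := exists_coeff_normSqDefectPoly_re_pos h hcond
  obtain ⟨y, hy, hy0, hyZ⟩ :=
    ((eventually_re_eval_pos _ hlow hN).and (Ioc_mem_nhdsGT hZ)).exists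
  rw [eval_normSqDefectPoly, ofReal_re, sub_pos] at hy
  refine ⟨y, abs_pos.2 hy0.ne', (abs_of_pos hy0).le.trans hyZ, ?_⟩
  exact (one_lt_sq_iff₀ (norm_nonneg _)).1 hy
end
end

section
/- Let L ∈ ℂ^{n×n} be semi-dissipative. Then there exist n₁, n₂ ∈ ℕ₀ with n₁ + n₂ = n, a unitary matrix V ∈ ℂ^{n×n}, and matrices L₁ ∈ ℂ^{n₁×n₁}, L₂ ∈ ℂ^{n₂×n₂} such that, after identifying ℂ^n with ℂ^{n₁} ⊕ ℂ^{n₂}, the matrix V L V* equals the block diagonal matrix diag(L₁, L₂) (with vanishing off-diagonal blocks), where L₁ is semi-dissipative and asymptotically stable, and L₂ is skew-Hermitian (L₂* = −L₂). -/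
open Matrix Polynomial
open scoped Matrix.Norms.L2Operator ComplexOrder

noncomputable section

/-!
Let `K = {v | ∀ j, L_H Lʲ v = 0}`, the largest `L`-invariant subspace on which `L_H` vanishes.
On `K` we have `L* = -L`, so `K` is `L*`-invariant as well and therefore reduces `L`: in an
orthonormal basis adapted to `Kᗮ ⊕ K` the matrix `L` is block diagonal, and its block on `K` is
skew-Hermitian. The block `L₁` on `Kᗮ` is a compression of `L`, hence semi-dissipative. An
eigenvector of `L₁` for `μ` gives an eigenvector `w ∈ Kᗮ` of `L`, so `Re μ ≤ 0`; if `Re μ = 0`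
then `⟪w, L_H w⟫ = 0`, which for the semidefinite `L_H` forces `L_H w = 0`, so `w ∈ K ∩ Kᗮ = 0`.
-/

open WithLp

theorem Matrix.exists_mulVec_eq_smul_of_mem_spectrum {K ι : Type*} [Field K] [Fintype ι]
    [DecidableEq ι] {A : Matrix ι ι K} {μ : K} (h : μ ∈ spectrum K A) :
    ∃ v ≠ 0, A *ᵥ v = μ • v := by
  rw [← spectrum_toLin', ← Module.End.hasEigenvalue_iff_mem_spectrum] at h
  obtain ⟨v, hv⟩ := h.exists_hasEigenvector
  exact ⟨v, hv.2, by simpa using hv.apply_eq_smul⟩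

theorem Matrix.submatrix_conjTranspose_mul_mul_conjTranspose {m ι R : Type*} [Fintype m]
    [CommRing R] [StarRing R] (e : m ≃ ι) (B : Matrix m ι R) (L : Matrix m m R) :
    Bᴴ.submatrix e id * L * (Bᴴ.submatrix e id)ᴴ = (Bᴴ * L * B).submatrix e e := by
  ext i j
  simp [mul_apply, conjTranspose_submatrix]

theorem Matrix.submatrix_conjTranspose_mem_unitaryGroup {m ι R : Type*} [Fintype m] [DecidableEq m]
    [DecidableEq ι] [CommRing R] [StarRing R] (e : m ≃ ι) {B : Matrix m ι R}
    (hB : Bᴴ * B = 1) : Bᴴ.submatrix e id ∈ unitaryGroup m R := by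
  have h := submatrix_conjTranspose_mul_mul_conjTranspose e B 1
  rwa [Matrix.mul_one, Matrix.mul_one, hB, submatrix_one_equiv, ← star_eq_conjTranspose,
    ← mem_unitaryGroup_iff] at h

def colMatrix {𝕜 m ι : Type*} (v : ι → EuclideanSpace 𝕜 m) : Matrix m ι 𝕜 :=
  of fun k p => v p k

section colMatrix

variable {𝕜 m ι κ : Type*} [RCLike 𝕜] [Fintype m]

theorem conjTranspose_colMatrix_mulVec (v : ι → EuclideanSpace 𝕜 m) (w : EuclideanSpace 𝕜 m) :
    (colMatrix v)ᴴ *ᵥ ofLp w = fun p => inner 𝕜 (v p) w := by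
  ext p
  simp [colMatrix, mulVec, dotProduct, PiLp.inner_apply, mul_comm]

theorem conjTranspose_colMatrix_mul_colMatrix (v : ι → EuclideanSpace 𝕜 m)
    (w : κ → EuclideanSpace 𝕜 m) :
    (colMatrix v)ᴴ * colMatrix w = of fun p q => inner 𝕜 (v p) (w q) := by
  ext p q
  simp [colMatrix, mul_apply, PiLp.inner_apply, mul_comm]

theorem mul_colMatrix [DecidableEq m] (L : Matrix m m 𝕜) (w : κ → EuclideanSpace 𝕜 m) :
    L * colMatrix w = colMatrix fun q => toEuclideanLin L (w q) := by
  ext k q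
  simp [colMatrix, mul_apply, mulVec, dotProduct]

theorem conjTranspose_colMatrix_mul_self [DecidableEq ι] {v : ι → EuclideanSpace 𝕜 m}
    (hv : Orthonormal 𝕜 v) : (colMatrix v)ᴴ * colMatrix v = 1 := by
  ext p q
  rw [conjTranspose_colMatrix_mul_colMatrix, of_apply, orthonormal_iff_ite.mp hv, one_apply]

end colMatrix

def Submodule.onbMatrix {𝕜 m : Type*} [RCLike 𝕜] [Fintype m]
    (K : Submodule 𝕜 (EuclideanSpace 𝕜 m)) :
    Matrix m (Fin (Module.finrank 𝕜 K)) 𝕜 :=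
  colMatrix fun p => (stdOrthonormalBasis 𝕜 K p : EuclideanSpace 𝕜 m)

namespace Submodule

variable {𝕜 m : Type*} [RCLike 𝕜] [Fintype m]

theorem onbMatrix_conjTranspose_mul_self (K : Submodule 𝕜 (EuclideanSpace 𝕜 m)) :
    K.onbMatrixᴴ * K.onbMatrix = 1 :=
  conjTranspose_colMatrix_mul_self ((stdOrthonormalBasis 𝕜 K).orthonormal.comp_linearIsometry
    K.subtypeₗᵢ)

theorem onbMatrix_conjTranspose_mulVec_eq_zero {K : Submodule 𝕜 (EuclideanSpace 𝕜 m)}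
    {v : EuclideanSpace 𝕜 m} (hv : v ∈ Kᗮ) : K.onbMatrixᴴ *ᵥ ofLp v = 0 := by
  rw [onbMatrix, conjTranspose_colMatrix_mulVec]
  exact funext fun p => inner_right_of_mem_orthogonal (stdOrthonormalBasis 𝕜 K p).2 hv

theorem onbMatrix_conjTranspose_mul_mul_eq_zero [DecidableEq m]
    {K₁ K₂ : Submodule 𝕜 (EuclideanSpace 𝕜 m)} {L : Matrix m m 𝕜}
    (hL : ∀ v ∈ K₂, toEuclideanLin L v ∈ K₁ᗮ) :
    K₁.onbMatrixᴴ * L * K₂.onbMatrix = 0 := by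
  ext p q
  rw [Matrix.mul_assoc, onbMatrix, onbMatrix, mul_colMatrix, conjTranspose_colMatrix_mul_colMatrix,
    of_apply, inner_right_of_mem_orthogonal (stdOrthonormalBasis 𝕜 K₁ p).2
      (hL _ (stdOrthonormalBasis 𝕜 K₂ q).2), Matrix.zero_apply]

theorem finrank_orthogonal_add_finrank (K : Submodule 𝕜 (EuclideanSpace 𝕜 m)) :
    Module.finrank 𝕜 Kᗮ + Module.finrank 𝕜 K = Fintype.card m := by
  rw [add_comm, K.finrank_add_finrank_orthogonal, finrank_euclideanSpace]

theorem conjTranspose_fromCols_onbMatrix_mul_self [DecidableEq m]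
    (K : Submodule 𝕜 (EuclideanSpace 𝕜 m)) :
    (fromCols Kᗮ.onbMatrix K.onbMatrix)ᴴ * fromCols Kᗮ.onbMatrix K.onbMatrix = 1 := by
  have h₁₂ : Kᗮ.onbMatrixᴴ * K.onbMatrix = 0 := by
    simpa using onbMatrix_conjTranspose_mul_mul_eq_zero (K₁ := Kᗮ) (K₂ := K) (L := 1)
      fun v hv => by simpa using K.le_orthogonal_orthogonal hv
  have h₂₁ : K.onbMatrixᴴ * Kᗮ.onbMatrix = 0 := by simpa using congrArg conjTranspose h₁₂
  rw [conjTranspose_fromCols_eq_fromRows_conjTranspose, fromRows_mul_fromCols,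
    onbMatrix_conjTranspose_mul_self, onbMatrix_conjTranspose_mul_self, h₁₂, h₂₁, fromBlocks_one]

theorem onbMatrix_mul_conjTranspose_add [DecidableEq m] (K : Submodule 𝕜 (EuclideanSpace 𝕜 m)) :
    Kᗮ.onbMatrix * Kᗮ.onbMatrixᴴ + K.onbMatrix * K.onbMatrixᴴ = 1 := by
  rw [← fromCols_mul_fromRows, ← conjTranspose_fromCols_eq_fromRows_conjTranspose]
  refine (mul_eq_one_comm_of_card_eq _ _ _ ?_).mp K.conjTranspose_fromCols_onbMatrix_mul_self
  simp [K.finrank_orthogonal_add_finrank]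

theorem mul_onbMatrix_of_mapsTo [DecidableEq m] {K : Submodule 𝕜 (EuclideanSpace 𝕜 m)}
    {L : Matrix m m 𝕜} (hK : ∀ v ∈ K, toEuclideanLin L v ∈ K) :
    L * K.onbMatrix = K.onbMatrix * (K.onbMatrixᴴ * L * K.onbMatrix) := by
  have h₀ : Kᗮ.onbMatrixᴴ * L * K.onbMatrix = 0 :=
    onbMatrix_conjTranspose_mul_mul_eq_zero fun v hv => K.le_orthogonal_orthogonal (hK v hv)
  calc L * K.onbMatrix
        = (Kᗮ.onbMatrix * Kᗮ.onbMatrixᴴ + K.onbMatrix * K.onbMatrixᴴ) * L * K.onbMatrix := by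
        rw [K.onbMatrix_mul_conjTranspose_add, Matrix.one_mul]
    _ = Kᗮ.onbMatrix * (Kᗮ.onbMatrixᴴ * L * K.onbMatrix) +
          K.onbMatrix * (K.onbMatrixᴴ * L * K.onbMatrix) := by
        simp only [Matrix.add_mul, Matrix.mul_assoc]
    _ = K.onbMatrix * (K.onbMatrixᴴ * L * K.onbMatrix) := by
        rw [h₀, Matrix.mul_zero, zero_add]

theorem conjTranspose_fromCols_onbMatrix_mul_mul [DecidableEq m]
    {K : Submodule 𝕜 (EuclideanSpace 𝕜 m)} {L : Matrix m m 𝕜}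
    (hK : ∀ v ∈ K, toEuclideanLin L v ∈ K) (hK' : ∀ v ∈ Kᗮ, toEuclideanLin L v ∈ Kᗮ) :
    (fromCols Kᗮ.onbMatrix K.onbMatrix)ᴴ * L * fromCols Kᗮ.onbMatrix K.onbMatrix =
      fromBlocks (Kᗮ.onbMatrixᴴ * L * Kᗮ.onbMatrix) 0 0 (K.onbMatrixᴴ * L * K.onbMatrix) := by
  rw [conjTranspose_fromCols_eq_fromRows_conjTranspose, fromRows_mul, fromRows_mul_fromCols,
    onbMatrix_conjTranspose_mul_mul_eq_zero fun v hv => K.le_orthogonal_orthogonal (hK v hv),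
    onbMatrix_conjTranspose_mul_mul_eq_zero hK']

end Submodule

theorem star_dotProduct_hermPart_mulVec {n : ℕ} {L : Matrix (Fin n) (Fin n) ℂ} {μ : ℂ}
    {v : Fin n → ℂ} (h : L *ᵥ v = μ • v) :
    star v ⬝ᵥ (hermPart L *ᵥ v) = μ.re * (star v ⬝ᵥ v) := by
  have hL : star v ⬝ᵥ (L *ᵥ v) = μ * (star v ⬝ᵥ v) := by
    rw [h, dotProduct_smul, smul_eq_mul]
  have hLH : star v ⬝ᵥ (Lᴴ *ᵥ v) = star μ * (star v ⬝ᵥ v) := by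
    rw [dotProduct_mulVec, ← star_mulVec, h, star_smul, smul_dotProduct, smul_eq_mul]
  have hre : μ + starRingEnd ℂ μ = 2 * μ.re := by simpa using Complex.add_conj μ
  rw [hermPart, smul_mulVec, add_mulVec, dotProduct_smul, dotProduct_add, hL, hLH, smul_eq_mul,
    Complex.star_def]
  linear_combination (star v ⬝ᵥ v / 2) * hre

namespace IsSemiDissipative

variable {n : ℕ} {L : Matrix (Fin n) (Fin n) ℂ}

theorem re_le_zero (hL : IsSemiDissipative L) {μ : ℂ} {v : Fin n → ℂ} (hv : v ≠ 0)
    (h : L *ᵥ v = μ • v) : μ.re ≤ 0 := by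
  have hpos := hL.dotProduct_mulVec_nonneg v
  rw [neg_mulVec, dotProduct_neg, star_dotProduct_hermPart_mulVec h, neg_nonneg] at hpos
  by_contra! hμ
  exact (mul_pos (Complex.zero_lt_real.mpr hμ) (dotProduct_star_self_pos_iff.mpr hv)).not_ge hpos

theorem hermPart_mulVec_eq_zero (hL : IsSemiDissipative L) {μ : ℂ} {v : Fin n → ℂ}
    (h : L *ᵥ v = μ • v) (hμ : μ.re = 0) : hermPart L *ᵥ v = 0 := by
  have := (hL.dotProduct_mulVec_zero_iff v).mp (by
    rw [neg_mulVec, dotProduct_neg, star_dotProduct_hermPart_mulVec h, hμ]; simp)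
  rwa [neg_mulVec, neg_eq_zero] at this

theorem conjTranspose_mul_mul {m : ℕ} (hL : IsSemiDissipative L) (B : Matrix (Fin n) (Fin m) ℂ) :
    IsSemiDissipative (Bᴴ * L * B) := by
  have : -hermPart (Bᴴ * L * B) = Bᴴ * -hermPart L * B := by
    simp only [hermPart, conjTranspose_mul, conjTranspose_conjTranspose, Matrix.mul_smul,
      Matrix.smul_mul, Matrix.mul_neg, Matrix.neg_mul, Matrix.mul_add, Matrix.add_mul,
      Matrix.mul_assoc]
  rw [IsSemiDissipative, this]
  exact hL.conjTranspose_mul_mul_same B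

end IsSemiDissipative

def conservativeSubspace {n : ℕ} (L : Matrix (Fin n) (Fin n) ℂ) :
    Submodule ℂ (EuclideanSpace ℂ (Fin n)) where
  carrier := {v | ∀ j : ℕ, hermPart L *ᵥ (L ^ j *ᵥ ofLp v) = 0}
  add_mem' hv hw j := by simp [mulVec_add, hv j, hw j]
  zero_mem' j := by simp
  smul_mem' c v hv j := by simp [mulVec_smul, hv j]

section conservativeSubspace

variable {n : ℕ} {L : Matrix (Fin n) (Fin n) ℂ}

theorem toEuclideanLin_mem_conservativeSubspace {v : EuclideanSpace ℂ (Fin n)}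
    (hv : v ∈ conservativeSubspace L) : toEuclideanLin L v ∈ conservativeSubspace L := by
  intro j
  simpa [mulVec_mulVec, ← pow_succ] using hv (j + 1)

theorem toEuclideanLin_conjTranspose_of_mem_conservativeSubspace {v : EuclideanSpace ℂ (Fin n)}
    (hv : v ∈ conservativeSubspace L) : toEuclideanLin Lᴴ v = -toEuclideanLin L v := by
  have h := hv 0
  rw [pow_zero, one_mulVec, hermPart, smul_mulVec, add_mulVec, smul_eq_zero] at h
  rw [toLpLin_apply, toLpLin_apply, ← toLp_neg,
    eq_neg_of_add_eq_zero_right (h.resolve_left (by norm_num))]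

theorem toEuclideanLin_mem_orthogonal_conservativeSubspace {w : EuclideanSpace ℂ (Fin n)}
    (hw : w ∈ (conservativeSubspace L)ᗮ) : toEuclideanLin L w ∈ (conservativeSubspace L)ᗮ := by
  intro v hv
  rw [← LinearMap.adjoint_inner_left, ← toEuclideanLin_conjTranspose_eq_adjoint,
    toEuclideanLin_conjTranspose_of_mem_conservativeSubspace hv, inner_neg_left,
    Submodule.inner_right_of_mem_orthogonal (toEuclideanLin_mem_conservativeSubspace hv) hw,
    neg_zero]

theorem mem_conservativeSubspace_of_mulVec_eq_smul {μ : ℂ} {v : Fin n → ℂ}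
    (h : L *ᵥ v = μ • v) (hH : hermPart L *ᵥ v = 0) : toLp 2 v ∈ conservativeSubspace L := by
  have hpow (j : ℕ) : L ^ j *ᵥ v = μ ^ j • v := by
    induction j with
    | zero => simp
    | succ j ih => rw [pow_succ, ← mulVec_mulVec, h, mulVec_smul, ih, smul_smul, ← pow_succ']
  intro j
  simp [hpow, mulVec_smul, hH]

end conservativeSubspace

theorem IsSemiDissipative.isAsympStable_of_mul_eq {n m : ℕ} {L : Matrix (Fin n) (Fin n) ℂ}
    (hL : IsSemiDissipative L) {B : Matrix (Fin n) (Fin m) ℂ} {L₁ : Matrix (Fin m) (Fin m) ℂ}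
    (hB : Bᴴ * B = 1) (hLB : L * B = B * L₁)
    (hK : ∀ v ∈ conservativeSubspace L, Bᴴ *ᵥ ofLp v = 0) : IsAsympStable L₁ := by
  intro μ hμ
  obtain ⟨x, hx0, hx⟩ := exists_mulVec_eq_smul_of_mem_spectrum hμ
  have hw : L *ᵥ (B *ᵥ x) = μ • (B *ᵥ x) := by
    rw [mulVec_mulVec, hLB, ← mulVec_mulVec, hx, mulVec_smul]
  have hx_eq : Bᴴ *ᵥ (B *ᵥ x) = x := by rw [mulVec_mulVec, hB, one_mulVec]
  have hw0 : B *ᵥ x ≠ 0 := fun h => hx0 (by rw [← hx_eq, h, mulVec_zero])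
  refine (hL.re_le_zero hw0 hw).lt_of_ne fun hre => hx0 ?_
  rw [← hx_eq]
  exact hK _ (mem_conservativeSubspace_of_mulVec_eq_smul hw (hL.hermPart_mulVec_eq_zero hw hre))

theorem conjTranspose_compression_conservativeSubspace {n : ℕ} (L : Matrix (Fin n) (Fin n) ℂ) :
    ((conservativeSubspace L).onbMatrixᴴ * L * (conservativeSubspace L).onbMatrix)ᴴ =
      -((conservativeSubspace L).onbMatrixᴴ * L * (conservativeSubspace L).onbMatrix) := by
  have hskew :
      Lᴴ * (conservativeSubspace L).onbMatrix = -(L * (conservativeSubspace L).onbMatrix) := by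
    rw [Submodule.onbMatrix, mul_colMatrix, mul_colMatrix]
    ext k q
    simp only [colMatrix, of_apply, toEuclideanLin_conjTranspose_of_mem_conservativeSubspace
      (stdOrthonormalBasis ℂ (conservativeSubspace L) q).2]
    rfl
  rw [conjTranspose_mul, conjTranspose_mul, conjTranspose_conjTranspose, Matrix.mul_assoc, hskew,
    Matrix.mul_neg]

/-- unitary block diagonalization of a semi-dissipative matrix into an
asymptotically stable semi-dissipative block and a skew-Hermitian block. -/
theorem stmt11 {n : ℕ} (L : Matrix (Fin n) (Fin n) ℂ) (hsd : IsSemiDissipative L) :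
    ∃ (n₁ n₂ : ℕ) (h : n₁ + n₂ = n) (V : Matrix (Fin n) (Fin n) ℂ)
      (L₁ : Matrix (Fin n₁) (Fin n₁) ℂ) (L₂ : Matrix (Fin n₂) (Fin n₂) ℂ),
      V ∈ Matrix.unitaryGroup (Fin n) ℂ ∧
      V * L * Vᴴ = (Matrix.fromBlocks L₁ 0 0 L₂).submatrix
          (fun i => finSumFinEquiv.symm (Fin.cast h.symm i))
          (fun j => finSumFinEquiv.symm (Fin.cast h.symm j)) ∧
      IsSemiDissipative L₁ ∧ IsAsympStable L₁ ∧ L₂ᴴ = -L₂ := by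
  set K := conservativeSubspace L
  have hK : ∀ v ∈ K, toEuclideanLin L v ∈ K := fun _ => toEuclideanLin_mem_conservativeSubspace
  have hK' : ∀ v ∈ Kᗮ, toEuclideanLin L v ∈ Kᗮ :=
    fun _ => toEuclideanLin_mem_orthogonal_conservativeSubspace
  have h : Module.finrank ℂ Kᗮ + Module.finrank ℂ K = n := by
    simpa using K.finrank_orthogonal_add_finrank
  let e : Fin n ≃ Fin _ ⊕ Fin _ := (finCongr h.symm).trans finSumFinEquiv.symm
  refine ⟨_, _, h, (fromCols Kᗮ.onbMatrix K.onbMatrix)ᴴ.submatrix e id, _, _,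
    submatrix_conjTranspose_mem_unitaryGroup e K.conjTranspose_fromCols_onbMatrix_mul_self, ?_,
    hsd.conjTranspose_mul_mul _,
    hsd.isAsympStable_of_mul_eq Kᗮ.onbMatrix_conjTranspose_mul_self
      (Submodule.mul_onbMatrix_of_mapsTo hK')
      fun v hv => Submodule.onbMatrix_conjTranspose_mulVec_eq_zero (K.le_orthogonal_orthogonal hv),
    conjTranspose_compression_conservativeSubspace L⟩
  rw [submatrix_conjTranspose_mul_mul_conjTranspose,
    Submodule.conjTranspose_fromCols_onbMatrix_mul_mul hK hK']
  rfl
end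
end

section
/- Let L ∈ ℂ^{n×n} with negative semidefinite Hermitian part L_H, let m ∈ ℕ, and let u₀ ∈ ℂ^n satisfy L_H (L_S)^j u₀ = 0 for all 0 ≤ j ≤ m−1. Then ⟨u₀, (L^{2m+1} + (L*)^{2m+1}) u₀⟩ = 2·(−1)^m · ⟨L_S^m u₀, L_H L_S^m u₀⟩; in particular this quantity equals −2·(−1)^m · ‖(−L_H)^{1/2} L_S^m u₀‖². -/
open Matrix Polynomial
open scoped Matrix.Norms.L2Operator ComplexOrder

noncomputable section

/-- The square root of a positive semidefinite matrix (removed from Mathlib; old definition). -/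
def Matrix.PosSemidef.sqrt {n 𝕜 : Type*} [Fintype n] [RCLike 𝕜] [DecidableEq n]
    {A : Matrix n n 𝕜} (hA : A.PosSemidef) : Matrix n n 𝕜 :=
  (hA.1.eigenvectorUnitary : Matrix n n 𝕜) * diagonal ((↑) ∘ (√·) ∘ hA.1.eigenvalues) *
    (star hA.1.eigenvectorUnitary : Matrix n n 𝕜)

/-
Since `L = L_H + L_S` and `L* = L_H - L_S`, and `L_H` vanishes on `u₀, L_S u₀, …, L_S^{m-1} u₀`,
we get `L^m u₀ = v` and `(L*)^m u₀ = (-1)^m v` with `v = L_S^m u₀`. Moving `m` factors across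
the inner product gives `⟨u₀, L^{2m+1} u₀⟩ = (-1)^m ⟨v, L v⟩` and
`⟨u₀, (L*)^{2m+1} u₀⟩ = (-1)^m ⟨v, L* v⟩`, which add up to `2 (-1)^m ⟨v, L_H v⟩`;
finally `⟨v, L_H v⟩ = -⟨(-L_H)^{1/2} v, (-L_H)^{1/2} v⟩`.
-/

namespace Matrix

section PowMulVec

variable {ι R : Type*} [Fintype ι] [DecidableEq ι] [CommRing R] {A B : Matrix ι ι R}
  {u : ι → R} {k : ℕ}

theorem add_pow_mulVec_of_mulVec_pow_mulVec_eq_zero (h : ∀ j < k, A *ᵥ (B ^ j *ᵥ u) = 0) :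
    (A + B) ^ k *ᵥ u = B ^ k *ᵥ u := by
  induction k with
  | zero => rfl
  | succ k ih =>
    rw [pow_succ', ← mulVec_mulVec, ih fun j hj => h j (by omega), add_mulVec,
      h k k.lt_succ_self, zero_add, mulVec_mulVec, ← pow_succ']

theorem sub_pow_mulVec_of_mulVec_pow_mulVec_eq_zero (h : ∀ j < k, A *ᵥ (B ^ j *ᵥ u) = 0) :
    (A - B) ^ k *ᵥ u = (-1 : R) ^ k • (B ^ k *ᵥ u) := by
  have hneg : ∀ j : ℕ, (-B) ^ j *ᵥ u = (-1 : R) ^ j • (B ^ j *ᵥ u) := fun j => by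
    rw [← neg_one_smul R B, _root_.smul_pow, smul_mulVec]
  rw [sub_eq_add_neg, add_pow_mulVec_of_mulVec_pow_mulVec_eq_zero fun j hj => by
    rw [hneg, mulVec_smul, h j hj, smul_zero], hneg]

end PowMulVec

section Star

variable {ι 𝕜 : Type*} [Fintype ι] [RCLike 𝕜]

theorem star_dotProduct_mulVec_eq (A : Matrix ι ι 𝕜) (u x : ι → 𝕜) :
    star u ⬝ᵥ (A *ᵥ x) = star (Aᴴ *ᵥ u) ⬝ᵥ x := by
  rw [star_mulVec, conjTranspose_conjTranspose, ← dotProduct_mulVec]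

theorem star_dotProduct_pow_add_mulVec [DecidableEq ι] (A : Matrix ι ι 𝕜) (u : ι → 𝕜) (m k : ℕ) :
    star u ⬝ᵥ (A ^ (m + k) *ᵥ u) = star ((Aᴴ) ^ m *ᵥ u) ⬝ᵥ (A ^ k *ᵥ u) := by
  rw [pow_add, ← mulVec_mulVec, star_dotProduct_mulVec_eq, conjTranspose_pow]

theorem star_dotProduct_self_eq_sum_norm_sq (w : ι → 𝕜) :
    star w ⬝ᵥ w = ((∑ i, ‖w i‖ ^ 2 : ℝ) : 𝕜) := by
  simp only [dotProduct, Pi.star_apply, RCLike.star_def, RCLike.conj_mul]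
  push_cast
  rfl

end Star

namespace PosSemidef

variable {ι 𝕜 : Type*} [Fintype ι] [DecidableEq ι] [RCLike 𝕜] {A : Matrix ι ι 𝕜}

theorem posSemidef_sqrt (hA : A.PosSemidef) : hA.sqrt.PosSemidef := by
  have hD : (diagonal ((↑) ∘ (√·) ∘ hA.1.eigenvalues : ι → 𝕜)).PosSemidef := by
    rw [posSemidef_diagonal_iff]
    intro i
    simp [Real.sqrt_nonneg]
  rw [PosSemidef.sqrt, star_eq_conjTranspose]
  exact hD.mul_mul_conjTranspose_same _

theorem sqrt_mul_self (hA : A.PosSemidef) : hA.sqrt * hA.sqrt = A := by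
  set U : Matrix ι ι 𝕜 := (hA.1.eigenvectorUnitary : Matrix ι ι 𝕜)
  set D : Matrix ι ι 𝕜 := diagonal ((↑) ∘ (√·) ∘ hA.1.eigenvalues)
  have hU : star U * U = 1 := Unitary.coe_star_mul_self _
  have hDD : D * D = diagonal (RCLike.ofReal ∘ hA.1.eigenvalues) := by
    rw [diagonal_mul_diagonal]
    congr 1; funext i
    simp only [Function.comp_apply]
    rw [← RCLike.ofReal_mul, Real.mul_self_sqrt (hA.eigenvalues_nonneg i)]
  conv_rhs => rw [hA.1.spectral_theorem, Unitary.conjStarAlgAut_apply]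
  calc hA.sqrt * hA.sqrt = U * D * (star U * U) * D * star U := by
        simp only [PosSemidef.sqrt, U, D, Matrix.mul_assoc]
    _ = _ := by rw [hU, Matrix.mul_one, Matrix.mul_assoc U D D, hDD]

theorem star_dotProduct_mulVec_eq_sqrt (hA : A.PosSemidef) (v : ι → 𝕜) :
    star v ⬝ᵥ (A *ᵥ v) = star (hA.sqrt *ᵥ v) ⬝ᵥ (hA.sqrt *ᵥ v) := by
  conv_lhs => rw [← hA.sqrt_mul_self, ← mulVec_mulVec]
  rw [star_dotProduct_mulVec_eq, hA.posSemidef_sqrt.isHermitian.eq]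

end PosSemidef

end Matrix

section HermSkew

variable {n : ℕ}

theorem hermPart_add_skewPart (L : Matrix (Fin n) (Fin n) ℂ) : hermPart L + skewPart L = L := by
  simp only [hermPart, skewPart, ← smul_add]
  rw [add_add_sub_cancel, ← two_smul ℂ L, smul_smul]
  norm_num

theorem two_smul_hermPart (L : Matrix (Fin n) (Fin n) ℂ) : (2 : ℂ) • hermPart L = L + Lᴴ := by
  rw [hermPart, smul_smul]
  norm_num

theorem hermPart_sub_skewPart (L : Matrix (Fin n) (Fin n) ℂ) : hermPart L - skewPart L = Lᴴ := by
  simp only [hermPart, skewPart, ← smul_sub]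
  rw [add_sub_sub_cancel, ← two_smul ℂ Lᴴ, smul_smul]
  norm_num

theorem star_dotProduct_odd_pow_add_conjTranspose_pow_mulVec (L : Matrix (Fin n) (Fin n) ℂ)
    (m : ℕ) (u₀ : Fin n → ℂ) (h : ∀ j < m, hermPart L *ᵥ ((skewPart L) ^ j *ᵥ u₀) = 0) :
    star u₀ ⬝ᵥ ((L ^ (2 * m + 1) + (Lᴴ) ^ (2 * m + 1)) *ᵥ u₀) =
      2 * (-1 : ℂ) ^ m *
        (star ((skewPart L) ^ m *ᵥ u₀) ⬝ᵥ (hermPart L *ᵥ ((skewPart L) ^ m *ᵥ u₀))) := by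
  set v := skewPart L ^ m *ᵥ u₀
  have hpow : L ^ m *ᵥ u₀ = v := by
    simpa only [hermPart_add_skewPart] using add_pow_mulVec_of_mulVec_pow_mulVec_eq_zero h
  have hpow_adj : Lᴴ ^ m *ᵥ u₀ = (-1 : ℂ) ^ m • v := by
    simpa only [hermPart_sub_skewPart] using sub_pow_mulVec_of_mulVec_pow_mulVec_eq_zero h
  have hL : star u₀ ⬝ᵥ (L ^ (2 * m + 1) *ᵥ u₀) = (-1 : ℂ) ^ m * (star v ⬝ᵥ (L *ᵥ v)) := by
    rw [two_mul, add_assoc, star_dotProduct_pow_add_mulVec, pow_succ', ← mulVec_mulVec, hpow,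
      hpow_adj]
    simp
  have hL_adj : star u₀ ⬝ᵥ (Lᴴ ^ (2 * m + 1) *ᵥ u₀) = (-1 : ℂ) ^ m * (star v ⬝ᵥ (Lᴴ *ᵥ v)) := by
    rw [two_mul, add_assoc, star_dotProduct_pow_add_mulVec, conjTranspose_conjTranspose,
      pow_succ', ← mulVec_mulVec, hpow, hpow_adj, mulVec_smul, dotProduct_smul, smul_eq_mul]
  rw [add_mulVec, dotProduct_add, hL, hL_adj, ← mul_add, ← dotProduct_add, ← add_mulVec,
    ← two_smul_hermPart, smul_mulVec, dotProduct_smul, smul_eq_mul, mul_left_comm, mul_assoc]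

end HermSkew

theorem stmt15_general {n : ℕ} (L : Matrix (Fin n) (Fin n) ℂ) (hL : (-(hermPart L)).PosSemidef)
    (m : ℕ) (u₀ : Fin n → ℂ)
    (h : ∀ j < m, hermPart L *ᵥ ((skewPart L) ^ j *ᵥ u₀) = 0) :
    star u₀ ⬝ᵥ ((L ^ (2 * m + 1) + (Lᴴ) ^ (2 * m + 1)) *ᵥ u₀) =
        2 * (-1 : ℂ) ^ m *
          (star ((skewPart L) ^ m *ᵥ u₀) ⬝ᵥ (hermPart L *ᵥ ((skewPart L) ^ m *ᵥ u₀))) ∧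
      star u₀ ⬝ᵥ ((L ^ (2 * m + 1) + (Lᴴ) ^ (2 * m + 1)) *ᵥ u₀) =
        -2 * (-1 : ℂ) ^ m *
          ((∑ i, ‖(hL.sqrt *ᵥ ((skewPart L) ^ m *ᵥ u₀)) i‖ ^ 2 : ℝ) : ℂ) := by
  have hodd := star_dotProduct_odd_pow_add_conjTranspose_pow_mulVec L m u₀ h
  refine ⟨hodd, ?_⟩
  set w := hL.sqrt *ᵥ ((skewPart L) ^ m *ᵥ u₀)
  -- stated with `Complex.ofReal`, the cast of the goal, rather than `RCLike.ofReal`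
  have hnorm : star w ⬝ᵥ w = ((∑ i, ‖w i‖ ^ 2 : ℝ) : ℂ) := star_dotProduct_self_eq_sum_norm_sq w
  rw [hodd, ← hnorm, ← hL.star_dotProduct_mulVec_eq_sqrt, neg_mulVec, dotProduct_neg]
  ring

/-- odd-power identity
`⟨u₀, (L^{2m+1} + (L*)^{2m+1}) u₀⟩ = 2 (-1)^m ⟨L_S^m u₀, L_H L_S^m u₀⟩
  = -2 (-1)^m ‖(-L_H)^{1/2} L_S^m u₀‖²`. -/
theorem stmt15 {n : ℕ} (L : Matrix (Fin n) (Fin n) ℂ) (hL : (-(hermPart L)).PosSemidef)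
    (m : ℕ) (hm : 1 ≤ m) (u₀ : Fin n → ℂ)
    (h : ∀ j < m, hermPart L *ᵥ ((skewPart L) ^ j *ᵥ u₀) = 0) :
    star u₀ ⬝ᵥ ((L ^ (2 * m + 1) + (Lᴴ) ^ (2 * m + 1)) *ᵥ u₀) =
        2 * (-1 : ℂ) ^ m *
          (star ((skewPart L) ^ m *ᵥ u₀) ⬝ᵥ (hermPart L *ᵥ ((skewPart L) ^ m *ᵥ u₀))) ∧
      star u₀ ⬝ᵥ ((L ^ (2 * m + 1) + (Lᴴ) ^ (2 * m + 1)) *ᵥ u₀) =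
        -2 * (-1 : ℂ) ^ m *
          ((∑ i, ‖(hL.sqrt *ᵥ ((skewPart L) ^ m *ᵥ u₀)) i‖ ^ 2 : ℝ) : ℂ) :=
  stmt15_general L hL m u₀ h
end
end
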